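/- arXiv:1811.02184 — 6 statements merged into one kernel-verified Lean document; each statement's English description precedes it below -/
import Mathlib

section
/- Let Θ ⊆ ℝ^d be convex and compact, and let f : Θ × Θ → ℝ be a bifunction where f_{θ'}(θ) denotes the loss with distribution-generating parameter θ' and evaluation parameter θ. Suppose each f_{θ'}(·) is differentiable and α-strongly convex in the evaluation parameter, and ∇f_{·}(θ) is β-Lipschitz in the distribution-generating parameter, i.e., ‖∇f_{θ₁}(θ) - ∇f_{θ₂}(θ)‖ ≤ β‖θ₁ - θ₂‖ for all θ. Let θ* = argmin_{θ∈Θ} f_{θ₁}(θ) and θ̂* = argmin_{θ∈Θ} f_{θ₂}(θ). Then ‖θ* - θ̂*‖ ≤ (β/α)‖θ₁ - θ₂‖. -/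
/-!
Adding the strong convexity inequality at `θs` and at `θhs` makes `g θ₂` `α`-strongly monotone.
Testing the first-order conditions of the two problems against each other then bounds
`α ‖θs - θhs‖` by `‖g θ₂ θs - g θ₁ θs‖`, which the Lipschitz condition bounds by `β ‖θ₁ - θ₂‖`.
-/

section

variable {E : Type*} [NormedAddCommGroup E] [InnerProductSpace ℝ E]

theorem inner_gradient_sub_ge_of_strongConvex {s : Set E} {F : E → ℝ} {G : E → E} {α : ℝ}
    (hF : ∀ x ∈ s, ∀ y ∈ s, F y ≥ F x + (inner ℝ (G x) (y - x) : ℝ) + (α / 2) * ‖x - y‖ ^ 2)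
    {x y : E} (hx : x ∈ s) (hy : y ∈ s) :
    α * ‖x - y‖ ^ 2 ≤ (inner ℝ (G x - G y) (x - y) : ℝ) := by
  have hxy := hF x hx y hy
  have hyx := hF y hy x hx
  rw [← neg_sub x y, inner_neg_right] at hxy
  rw [norm_sub_rev y x] at hyx
  rw [inner_sub_left]
  linarith

theorem mul_norm_sub_le_of_variational_inequalities {G₁ G₂ : E → E} {α : ℝ} {x y : E}
    (hx : 0 ≤ (inner ℝ (G₁ x) (y - x) : ℝ)) (hy : 0 ≤ (inner ℝ (G₂ y) (x - y) : ℝ))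
    (hmono : α * ‖x - y‖ ^ 2 ≤ (inner ℝ (G₂ x - G₂ y) (x - y) : ℝ)) :
    α * ‖x - y‖ ≤ ‖G₂ x - G₁ x‖ := by
  have hsq : α * ‖x - y‖ ^ 2 ≤ ‖G₂ x - G₁ x‖ * ‖x - y‖ :=
    calc α * ‖x - y‖ ^ 2 ≤ (inner ℝ (G₂ x - G₂ y) (x - y) : ℝ) := hmono
      _ ≤ (inner ℝ (G₂ x - G₁ x) (x - y) : ℝ) := by
        rw [← neg_sub x y, inner_neg_right] at hx
        rw [inner_sub_left, inner_sub_left]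
        linarith
      _ ≤ ‖G₂ x - G₁ x‖ * ‖x - y‖ := real_inner_le_norm _ _
  rcases (norm_nonneg (x - y)).eq_or_lt with h0 | hpos
  · rw [← h0, mul_zero]
    exact norm_nonneg _
  · rw [sq, ← mul_assoc] at hsq
    exact le_of_mul_le_mul_right hsq hpos

end

theorem minimizer_contraction_general {d : ℕ}
    (Θ : Set (EuclideanSpace ℝ (Fin d)))
    (f : EuclideanSpace ℝ (Fin d) → EuclideanSpace ℝ (Fin d) → ℝ)
    (g : EuclideanSpace ℝ (Fin d) → EuclideanSpace ℝ (Fin d) → EuclideanSpace ℝ (Fin d))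
    (α β : ℝ) (hα : 0 < α)
    (hsc : ∀ p ∈ Θ, ∀ x ∈ Θ, ∀ y ∈ Θ,
      f p y ≥ f p x + (inner ℝ (g p x) (y - x) : ℝ) + (α / 2) * ‖x - y‖ ^ 2)
    (hlip : ∀ p₁ ∈ Θ, ∀ p₂ ∈ Θ, ∀ x ∈ Θ, ‖g p₁ x - g p₂ x‖ ≤ β * ‖p₁ - p₂‖)
    (θ₁ θ₂ θs θhs : EuclideanSpace ℝ (Fin d))
    (hθ₁ : θ₁ ∈ Θ) (hθ₂ : θ₂ ∈ Θ) (hθs : θs ∈ Θ) (hθhs : θhs ∈ Θ)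
    (hfoc₁ : ∀ θ ∈ Θ, (inner ℝ (g θ₁ θs) (θ - θs) : ℝ) ≥ 0)
    (hfoc₂ : ∀ θ ∈ Θ, (inner ℝ (g θ₂ θhs) (θ - θhs) : ℝ) ≥ 0) :
    ‖θs - θhs‖ ≤ (β / α) * ‖θ₁ - θ₂‖ := by
  have hmono := inner_gradient_sub_ge_of_strongConvex (hsc θ₂ hθ₂) hθs hθhs
  have hstab := mul_norm_sub_le_of_variational_inequalities
    (hfoc₁ θhs hθhs) (hfoc₂ θs hθs) hmono
  rw [div_mul_eq_mul_div, le_div_iff₀ hα, mul_comm]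
  calc α * ‖θs - θhs‖ ≤ ‖g θ₂ θs - g θ₁ θs‖ := hstab
    _ ≤ β * ‖θ₂ - θ₁‖ := hlip θ₂ hθ₂ θ₁ hθ₁ θs hθs
    _ = β * ‖θ₁ - θ₂‖ := by rw [norm_sub_rev]

/-- Proposition 1 (contraction of minimizers): under α-strong convexity in the
evaluation parameter and β-Lipschitz continuity of the gradient in the
distribution-generating parameter, the minimizers satisfy
‖θ* - θ̂*‖ ≤ (β/α)‖θ₁ - θ₂‖. -/
theorem minimizer_contraction {d : ℕ}
    (Θ : Set (EuclideanSpace ℝ (Fin d)))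
    (hconv : Convex ℝ Θ) (hcomp : IsCompact Θ)
    (f : EuclideanSpace ℝ (Fin d) → EuclideanSpace ℝ (Fin d) → ℝ)
    (g : EuclideanSpace ℝ (Fin d) → EuclideanSpace ℝ (Fin d) → EuclideanSpace ℝ (Fin d))
    (α β : ℝ) (hα : 0 < α) (hβ : 0 ≤ β)
    (hsc : ∀ p ∈ Θ, ∀ x ∈ Θ, ∀ y ∈ Θ,
      f p y ≥ f p x + (inner ℝ (g p x) (y - x) : ℝ) + (α / 2) * ‖x - y‖ ^ 2)
    (hlip : ∀ p₁ ∈ Θ, ∀ p₂ ∈ Θ, ∀ x ∈ Θ, ‖g p₁ x - g p₂ x‖ ≤ β * ‖p₁ - p₂‖)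
    (θ₁ θ₂ θs θhs : EuclideanSpace ℝ (Fin d))
    (hθ₁ : θ₁ ∈ Θ) (hθ₂ : θ₂ ∈ Θ) (hθs : θs ∈ Θ) (hθhs : θhs ∈ Θ)
    (hmin₁ : IsMinOn (f θ₁) Θ θs) (hmin₂ : IsMinOn (f θ₂) Θ θhs)
    (hfoc₁ : ∀ θ ∈ Θ, (inner ℝ (g θ₁ θs) (θ - θs) : ℝ) ≥ 0)
    (hfoc₂ : ∀ θ ∈ Θ, (inner ℝ (g θ₂ θhs) (θ - θhs) : ℝ) ≥ 0) :
    ‖θs - θhs‖ ≤ (β / α) * ‖θ₁ - θ₂‖ :=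
  minimizer_contraction_general Θ f g α β hα hsc hlip θ₁ θ₂ θs θhs hθ₁ hθ₂ hθs hθhs hfoc₁ hfoc₂
end

section
/- Under the assumptions of the contraction property (α-strong convexity in the evaluation parameter and β-Lipschitz continuity of the gradient in the distribution-generating parameter), if λ = β/α < 1, then the self-map F : Θ → Θ defined by F(θ) = argmin_{θ'∈Θ} f_θ(θ') has a unique fixed point θ★ ∈ Θ, i.e., there is a unique θ★ satisfying f_{θ★}(θ★) = min_{θ∈Θ} f_{θ★}(θ). -/
/-!
Strong convexity of `f θ` makes `g θ` strongly monotone with modulus `α`; combined with the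
first-order optimality of `F θ₁` and `F θ₂` and the `β`-Lipschitz dependence of `g` on the
parameter this gives `‖F θ₁ - F θ₂‖ ≤ (β / α) ‖θ₁ - θ₂‖`, so `F` is a contraction of the complete
set `Θ` and has a unique fixed point by Banach's theorem. A point minimizing its own loss is
exactly a fixed point of `F`: the strong convexity inequality at `F θ`, together with its
first-order condition, forces `F θ = θ`.
-/

open Set

theorem existsUnique_fixedPoint_of_dist_le_mul {X : Type*} [MetricSpace X] {s : Set X}
    (hs : IsComplete s) (hne : s.Nonempty) {F : X → X} (hF : MapsTo F s s) {K : ℝ} (hK : K < 1)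
    (hdist : ∀ x ∈ s, ∀ y ∈ s, dist (F x) (F y) ≤ K * dist x y) :
    ∃! x, x ∈ s ∧ F x = x := by
  obtain ⟨x₀, hx₀⟩ := hne
  have hcontr : ContractingWith K.toNNReal (hF.restrict F s s) := by
    refine ⟨by simpa using hK, LipschitzWith.of_dist_le_mul fun x y => ?_⟩
    calc dist (F x) (F y) ≤ K * dist x y := hdist x x.2 y y.2
      _ ≤ K.toNNReal * dist x y := by gcongr; exact Real.le_coe_toNNReal K
  obtain ⟨x, hxs, hfix, -⟩ := hcontr.exists_fixedPoint' hs hF hx₀ (edist_ne_top _ _)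
  refine ⟨x, ⟨hxs, hfix⟩, fun y ⟨hys, hy⟩ => dist_le_zero.mp ?_⟩
  have := hdist y hys x hxs
  rw [hy, hfix.eq] at this
  nlinarith [dist_nonneg (x := y) (y := x)]

section StronglyConvex

variable {E : Type*} [NormedAddCommGroup E] [InnerProductSpace ℝ E]

theorem mul_norm_sub_sq_le_inner_sub_of_strongConvex {s : Set E} {φ : E → ℝ} {G : E → E}
    {α : ℝ}
    (hsc : ∀ x ∈ s, ∀ y ∈ s, φ y ≥ φ x + inner ℝ (G x) (y - x) + α / 2 * ‖x - y‖ ^ 2)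
    {x y : E} (hx : x ∈ s) (hy : y ∈ s) :
    α * ‖x - y‖ ^ 2 ≤ inner ℝ (G x - G y) (x - y) := by
  have hxy := hsc x hx y hy
  have hyx := hsc y hy x hx
  rw [norm_sub_rev y x] at hyx
  rw [← neg_sub x y, inner_neg_right] at hxy
  rw [inner_sub_left]
  linarith

variable {Θ : Set E} {f : E → E → ℝ} {g : E → E → E} {F : E → E} {α β : ℝ}

theorem norm_sub_le_div_mul_of_strongConvex_of_lipschitz (hα : 0 < α)
    (hsc : ∀ p ∈ Θ, ∀ x ∈ Θ, ∀ y ∈ Θ,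
      f p y ≥ f p x + inner ℝ (g p x) (y - x) + α / 2 * ‖x - y‖ ^ 2)
    (hlip : ∀ p₁ ∈ Θ, ∀ p₂ ∈ Θ, ∀ x ∈ Θ, ‖g p₁ x - g p₂ x‖ ≤ β * ‖p₁ - p₂‖)
    (hFmem : ∀ θ ∈ Θ, F θ ∈ Θ)
    (hFfoc : ∀ θ ∈ Θ, ∀ θ' ∈ Θ, inner ℝ (g θ (F θ)) (θ' - F θ) ≥ 0)
    {θ₁ θ₂ : E} (h₁ : θ₁ ∈ Θ) (h₂ : θ₂ ∈ Θ) :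
    ‖F θ₁ - F θ₂‖ ≤ β / α * ‖θ₁ - θ₂‖ := by
  set x := F θ₁
  set y := F θ₂
  have hmono :=
    mul_norm_sub_sq_le_inner_sub_of_strongConvex (hsc θ₁ h₁) (hFmem θ₁ h₁) (hFmem θ₂ h₂)
  have hfoc₁ : inner ℝ (g θ₁ x) (x - y) ≤ 0 := by
    have := hFfoc θ₁ h₁ y (hFmem θ₂ h₂)
    rw [← neg_sub x y, inner_neg_right] at this
    linarith
  have hfoc₂ : inner ℝ (g θ₂ y) (x - y) ≥ 0 := hFfoc θ₂ h₂ x (hFmem θ₁ h₁)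
  have hl : ‖g θ₂ y - g θ₁ y‖ ≤ β * ‖θ₁ - θ₂‖ := by
    rw [norm_sub_rev θ₁]
    exact hlip θ₂ h₂ θ₁ h₁ y (hFmem θ₂ h₂)
  have key : α * ‖x - y‖ ^ 2 ≤ β * ‖θ₁ - θ₂‖ * ‖x - y‖ :=
    calc α * ‖x - y‖ ^ 2 ≤ inner ℝ (g θ₂ y - g θ₁ y) (x - y) := by
          rw [inner_sub_left] at hmono ⊢
          linarith
      _ ≤ ‖g θ₂ y - g θ₁ y‖ * ‖x - y‖ := real_inner_le_norm _ _
      _ ≤ β * ‖θ₁ - θ₂‖ * ‖x - y‖ := by gcongr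
  rw [div_mul_eq_mul_div, le_div_iff₀ hα]
  rcases (norm_nonneg (x - y)).eq_or_lt with h0 | h0
  · rw [← h0, zero_mul]
    exact (norm_nonneg _).trans hl
  · nlinarith

theorem eq_of_strongConvex_of_inner_nonneg {φ : E → ℝ} {G : E → E} {α : ℝ} (hα : 0 < α)
    {x y : E} (hsc : φ y ≥ φ x + inner ℝ (G x) (y - x) + α / 2 * ‖x - y‖ ^ 2)
    (hfoc : inner ℝ (G x) (y - x) ≥ 0) (hle : φ y ≤ φ x) :
    x = y := by
  have : ‖x - y‖ ^ 2 ≤ 0 := by nlinarith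
  rw [← sub_eq_zero, ← norm_eq_zero]
  exact pow_eq_zero_iff two_ne_zero |>.mp (this.antisymm (sq_nonneg _))

end StronglyConvex

theorem unique_stationary_point_general {d : ℕ}
    (Θ : Set (EuclideanSpace ℝ (Fin d)))
    (hcomp : IsCompact Θ) (hne : Θ.Nonempty)
    (f : EuclideanSpace ℝ (Fin d) → EuclideanSpace ℝ (Fin d) → ℝ)
    (g : EuclideanSpace ℝ (Fin d) → EuclideanSpace ℝ (Fin d) → EuclideanSpace ℝ (Fin d))
    (α β : ℝ) (hα : 0 < α)
    (hsc : ∀ p ∈ Θ, ∀ x ∈ Θ, ∀ y ∈ Θ,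
      f p y ≥ f p x + (inner ℝ (g p x) (y - x) : ℝ) + (α / 2) * ‖x - y‖ ^ 2)
    (hlip : ∀ p₁ ∈ Θ, ∀ p₂ ∈ Θ, ∀ x ∈ Θ, ‖g p₁ x - g p₂ x‖ ≤ β * ‖p₁ - p₂‖)
    (F : EuclideanSpace ℝ (Fin d) → EuclideanSpace ℝ (Fin d))
    (hFmem : ∀ θ ∈ Θ, F θ ∈ Θ)
    (hFmin : ∀ θ ∈ Θ, IsMinOn (f θ) Θ (F θ))
    (hFfoc : ∀ θ ∈ Θ, ∀ θ' ∈ Θ, (inner ℝ (g θ (F θ)) (θ' - F θ) : ℝ) ≥ 0)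
    (hlam : β / α < 1) :
    ∃! θstar, θstar ∈ Θ ∧ IsMinOn (f θstar) Θ θstar := by
  have stationary_iff_fixed : ∀ θ, θ ∈ Θ ∧ IsMinOn (f θ) Θ θ ↔ θ ∈ Θ ∧ F θ = θ := by
    refine fun θ => and_congr_right fun hθ => ⟨fun hmin => ?_, fun hfix => ?_⟩
    · exact eq_of_strongConvex_of_inner_nonneg hα (hsc θ hθ (F θ) (hFmem θ hθ) θ hθ)
        (hFfoc θ hθ θ hθ) (hmin (hFmem θ hθ))
    · simpa only [hfix] using hFmin θ hθ
  rw [existsUnique_congr stationary_iff_fixed]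
  refine existsUnique_fixedPoint_of_dist_le_mul hcomp.isClosed.isComplete hne
    (fun θ hθ => hFmem θ hθ) hlam fun θ₁ h₁ θ₂ h₂ => ?_
  simpa only [dist_eq_norm] using
    norm_sub_le_div_mul_of_strongConvex_of_lipschitz hα hsc hlip hFmem hFfoc h₁ h₂

/-- Corollary 1 (unique stationary point): if λ = β/α < 1, the self-map
F(θ) = argmin_{θ'∈Θ} f_θ(θ') has a unique fixed point θ★, i.e. there is a unique
θ★ ∈ Θ that minimizes its own loss f_{θ★} over Θ. -/
theorem unique_stationary_point {d : ℕ}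
    (Θ : Set (EuclideanSpace ℝ (Fin d)))
    (hconv : Convex ℝ Θ) (hcomp : IsCompact Θ) (hne : Θ.Nonempty)
    (f : EuclideanSpace ℝ (Fin d) → EuclideanSpace ℝ (Fin d) → ℝ)
    (g : EuclideanSpace ℝ (Fin d) → EuclideanSpace ℝ (Fin d) → EuclideanSpace ℝ (Fin d))
    (α β : ℝ) (hα : 0 < α) (hβ : 0 ≤ β)
    (hsc : ∀ p ∈ Θ, ∀ x ∈ Θ, ∀ y ∈ Θ,
      f p y ≥ f p x + (inner ℝ (g p x) (y - x) : ℝ) + (α / 2) * ‖x - y‖ ^ 2)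
    (hlip : ∀ p₁ ∈ Θ, ∀ p₂ ∈ Θ, ∀ x ∈ Θ, ‖g p₁ x - g p₂ x‖ ≤ β * ‖p₁ - p₂‖)
    (F : EuclideanSpace ℝ (Fin d) → EuclideanSpace ℝ (Fin d))
    (hFmem : ∀ θ ∈ Θ, F θ ∈ Θ)
    (hFmin : ∀ θ ∈ Θ, IsMinOn (f θ) Θ (F θ))
    (hFfoc : ∀ θ ∈ Θ, ∀ θ' ∈ Θ, (inner ℝ (g θ (F θ)) (θ' - F θ) : ℝ) ≥ 0)
    (hlam : β / α < 1) :
    ∃! θstar, θstar ∈ Θ ∧ IsMinOn (f θstar) Θ θstar :=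
  unique_stationary_point_general Θ hcomp hne f g α β hα hsc hlip F hFmem hFmin hFfoc hlam
end

section
/- Suppose nonnegative reals {d_n := ‖θ_n - θ_n*‖} satisfy Σ_{n=1}^N d_n ≤ d₁ + (ρ + c) Σ_{n=1}^N d_n for all N, where ρ + c < 1 and d₁ ≤ D. Then Σ_{n=1}^N d_n ≤ D/(1 - ρ - c) for all N; consequently if each f_n is G-Lipschitz, the dynamic regret satisfies Σ_{n=1}^N (f_n(θ_n) - f_n(θ_n*)) ≤ GD/(1 - ρ - c), a constant independent of N. -/
open Finset

/-- Constant dynamic regret for Imitation Gradient: from the self-bounding series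
inequality with ρ + c < 1 one gets Σ‖θ_n - θ_n*‖ ≤ D/(1-ρ-c), and with
G-Lipschitz losses the dynamic regret Σ(f_n(θ_n) - f_n(θ_n*)) ≤ GD/(1-ρ-c). -/
theorem constant_dynamic_regret {dm : ℕ}
    (θ θs : ℕ → EuclideanSpace ℝ (Fin dm))
    (f : ℕ → EuclideanSpace ℝ (Fin dm) → ℝ)
    (ρ c D G : ℝ) (hρ : 0 ≤ ρ) (hc : 0 ≤ c) (hρc : ρ + c < 1) (hG : 0 ≤ G)
    (hseries : ∀ N : ℕ, ∑ n ∈ Finset.range N, ‖θ n - θs n‖ ≤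
      ‖θ 0 - θs 0‖ + (ρ + c) * ∑ n ∈ Finset.range N, ‖θ n - θs n‖)
    (hd1 : ‖θ 0 - θs 0‖ ≤ D)
    (hGlip : ∀ n, f n (θ n) - f n (θs n) ≤ G * ‖θ n - θs n‖) :
    (∀ N : ℕ, ∑ n ∈ Finset.range N, ‖θ n - θs n‖ ≤ D / (1 - ρ - c)) ∧
    (∀ N : ℕ, ∑ n ∈ Finset.range N, (f n (θ n) - f n (θs n)) ≤
      G * D / (1 - ρ - c)) := by
  have hpos : 0 < 1 - ρ - c := by linarith
  have hS : ∀ N : ℕ, ∑ n ∈ Finset.range N, ‖θ n - θs n‖ ≤ D / (1 - ρ - c) := by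
    intro N
    have h := hseries N
    rw [le_div_iff₀ hpos]
    nlinarith [h, hd1]
  refine ⟨hS, fun N => ?_⟩
  have h1 : ∑ n ∈ Finset.range N, (f n (θ n) - f n (θs n)) ≤
      G * ∑ n ∈ Finset.range N, ‖θ n - θs n‖ := by
    rw [Finset.mul_sum]
    exact Finset.sum_le_sum fun n _ => hGlip n
  have h2 : G * ∑ n ∈ Finset.range N, ‖θ n - θs n‖ ≤ G * (D / (1 - ρ - c)) :=
    mul_le_mul_of_nonneg_left (hS N) hG
  calc _ ≤ _ := h1
    _ ≤ G * (D / (1 - ρ - c)) := h2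
    _ = G * D / (1 - ρ - c) := by ring
end

section
/- Suppose for each n, after K projected gradient steps with stepsize η < 1/γ on the α-strongly convex, γ-smooth loss f_n from the point θ_n, where K = ⌈((1/η + α)/(2α)) log 4⌉, the resulting iterate θ_{n+1} satisfies ‖θ_{n+1} - θ_n*‖² ≤ (1/4)‖θ_n - θ_n*‖². Then Σ_{n=1}^N ‖θ_n - θ_n*‖² ≤ 2‖θ₁ - θ₁*‖² + 4 S(θ*_{1:N}), where S(θ*_{1:N}) = Σ_{n=1}^{N-1} ‖θ_n* - θ_{n+1}*‖² is the squared path variation. -/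
open Finset

lemma sq_norm_add_le {d : ℕ} (x y : EuclideanSpace ℝ (Fin d)) :
    ‖x + y‖ ^ 2 ≤ 2 * ‖x‖ ^ 2 + 2 * ‖y‖ ^ 2 := by
  have h := norm_add_le x y
  have h2 : ‖x + y‖ ^ 2 ≤ (‖x‖ + ‖y‖) ^ 2 :=
    pow_le_pow_left₀ (norm_nonneg _) h 2
  nlinarith [sq_nonneg (‖x‖ - ‖y‖)]

lemma absorb_sum (a s : ℕ → ℝ) (h0 : ∀ n, 0 ≤ a n)
    (step : ∀ n, a (n + 1) ≤ (1 / 2) * a n + 2 * s n) (M : ℕ) :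
    ∑ n ∈ Finset.range (M + 1), a n ≤ 2 * a 0 + 4 * ∑ n ∈ Finset.range M, s n := by
  have key : ∀ M, (∑ n ∈ Finset.range (M + 1), a n) + a M ≤
      2 * a 0 + 4 * ∑ n ∈ Finset.range M, s n := by
    intro M
    induction M with
    | zero => simp [two_mul]
    | succ M ih =>
      rw [Finset.sum_range_succ (f := a) (n := M + 1),
        Finset.sum_range_succ (f := s) (n := M)]
      have h1 := step M
      have h2 : ∑ n ∈ Finset.range (M + 1), a n
          = (∑ n ∈ Finset.range M, a n) + a M := Finset.sum_range_succ a M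
      rw [h2] at ih ⊢
      linarith
  linarith [key M, h0 M]

/-- Squared-distance summation bound for Multiple Imitation Gradient: a per-round
factor-1/4 contraction toward the instantaneous optima (obtained with K =
⌈((1/η+α)/(2α)) log 4⌉ projected gradient steps, η < 1/γ) implies
Σ‖θ_n - θ_n*‖² ≤ 2‖θ₁ - θ₁*‖² + 4 S(θ*_{1:N}). -/
theorem squared_distance_sum_bound {d : ℕ}
    (θ θs : ℕ → EuclideanSpace ℝ (Fin d))
    (α γ η : ℝ) (hα : 0 < α) (hγ : 0 < γ) (hη : 0 < η) (hηγ : η < 1 / γ)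
    (K : ℕ) (hK : K = ⌈((1 / η + α) / (2 * α)) * Real.log 4⌉₊)
    (hcontract : ∀ n, ‖θ (n + 1) - θs n‖ ^ 2 ≤ (1 / 4) * ‖θ n - θs n‖ ^ 2)
    (N : ℕ) :
    ∑ n ∈ Finset.range N, ‖θ n - θs n‖ ^ 2 ≤
      2 * ‖θ 0 - θs 0‖ ^ 2 +
        4 * ∑ n ∈ Finset.range (N - 1), ‖θs n - θs (n + 1)‖ ^ 2 := by
  have step : ∀ n, ‖θ (n + 1) - θs (n + 1)‖ ^ 2 ≤
      (1 / 2) * ‖θ n - θs n‖ ^ 2 + 2 * ‖θs n - θs (n + 1)‖ ^ 2 := by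
    intro n
    have hdec : θ (n + 1) - θs (n + 1) = (θ (n + 1) - θs n) + (θs n - θs (n + 1)) := by
      abel
    have h1 : ‖θ (n + 1) - θs (n + 1)‖ ^ 2 ≤
        2 * ‖θ (n + 1) - θs n‖ ^ 2 + 2 * ‖θs n - θs (n + 1)‖ ^ 2 := by
      rw [hdec]; exact sq_norm_add_le _ _
    have h2 := hcontract n
    linarith
  cases N with
  | zero =>
    simp only [Finset.range_zero, Finset.sum_empty, Nat.zero_sub]
    positivity
  | succ M =>
    simpa using absorb_sum (fun n => ‖θ n - θs n‖ ^ 2)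
      (fun n => ‖θs n - θs (n + 1)‖ ^ 2) (fun n => sq_nonneg _) step M
end

section
/- Under the assumptions of the Multiple Imitation Gradient analysis (per-step factor 1/4 contraction toward θ_n* and γ-smoothness of each f_n with ∇f_n(θ_n*) = 0), the dynamic regret satisfies R_D = Σ_{n=1}^N (f_n(θ_n) - f_n(θ_n*)) ≤ 2γ S(θ*_{1:N}) + γ‖θ₁ - θ₁*‖². -/
open Finset

/-! Smoothness together with `∇f_n(θ_n*) = 0` bounds each regret term by `(γ/2)‖θ_n - θ_n*‖²`.
By the triangle inequality and the contraction, `a_n = ‖θ_n - θ_n*‖²` obeys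
`a_{n+1} ≤ a_n / 2 + 2‖θ_n* - θ_{n+1}*‖²`, and summing this recursion gives
`∑ a_n ≤ 2 a_0 + 4 S(θ*_{1:N})`. -/

theorem norm_sub_sq_le_two_mul {E : Type*} [SeminormedAddCommGroup E] (a b c : E) :
    ‖a - c‖ ^ 2 ≤ 2 * (‖a - b‖ ^ 2 + ‖b - c‖ ^ 2) :=
  (pow_le_pow_left₀ (norm_nonneg _) (norm_sub_le_norm_sub_add_norm_sub a b c) 2).trans add_sq_le

theorem sub_le_of_smooth_of_gradient_eq_zero {E : Type*} [NormedAddCommGroup E]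
    [InnerProductSpace ℝ E] {f : E → ℝ} {g : E → E} {γ : ℝ} {x : E}
    (hsm : ∀ y, f y ≤ f x + inner ℝ (g x) (y - x) + (γ / 2) * ‖x - y‖ ^ 2)
    (hx : g x = 0) (y : E) :
    f y - f x ≤ (γ / 2) * ‖y - x‖ ^ 2 := by
  have h := hsm y
  rw [hx, inner_zero_left, norm_sub_rev] at h
  linarith

theorem sum_range_le_of_le_mul_add {a b : ℕ → ℝ} {q : ℝ} (ha : ∀ n, 0 ≤ a n) (hq : 0 ≤ q)
    (hrec : ∀ n, a (n + 1) ≤ q * a n + b n) (N : ℕ) :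
    (1 - q) * ∑ n ∈ range N, a n ≤ a 0 + ∑ n ∈ range (N - 1), b n := by
  cases N with
  | zero => simpa using ha 0
  | succ M =>
    have hshift : ∑ n ∈ range M, a (n + 1) ≤ q * ∑ n ∈ range M, a n + ∑ n ∈ range M, b n := by
      rw [mul_sum, ← sum_add_distrib]
      exact sum_le_sum fun n _ => hrec n
    have hmono : ∑ n ∈ range M, a n ≤ ∑ n ∈ range (M + 1), a n :=
      sum_le_sum_of_subset_of_nonneg (range_subset_range.2 M.le_succ) fun n _ _ => ha n
    rw [sum_range_succ', Nat.add_sub_cancel] at *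
    nlinarith

/-- Lemma (Zhang et al., Theorem 3): under the factor-1/4 per-round contraction
and γ-smoothness with vanishing gradient at each minimizer, the dynamic regret
satisfies R_D ≤ 2γ S(θ*_{1:N}) + γ‖θ₁ - θ₁*‖². -/
theorem mig_dynamic_regret_bound {d : ℕ}
    (θ θs : ℕ → EuclideanSpace ℝ (Fin d))
    (f : ℕ → EuclideanSpace ℝ (Fin d) → ℝ)
    (g : ℕ → EuclideanSpace ℝ (Fin d) → EuclideanSpace ℝ (Fin d))
    (γ : ℝ) (hγ : 0 < γ)
    (hsm : ∀ n x y, f n y ≤ f n x + (inner ℝ (g n x) (y - x) : ℝ) + (γ / 2) * ‖x - y‖ ^ 2)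
    (hgrad0 : ∀ n, g n (θs n) = 0)
    (hcontract : ∀ n, ‖θ (n + 1) - θs n‖ ^ 2 ≤ (1 / 4) * ‖θ n - θs n‖ ^ 2)
    (N : ℕ) :
    ∑ n ∈ Finset.range N, (f n (θ n) - f n (θs n)) ≤
      2 * γ * (∑ n ∈ Finset.range (N - 1), ‖θs n - θs (n + 1)‖ ^ 2) +
        γ * ‖θ 0 - θs 0‖ ^ 2 := by
  set a : ℕ → ℝ := fun n => ‖θ n - θs n‖ ^ 2
  set S := ∑ n ∈ range (N - 1), ‖θs n - θs (n + 1)‖ ^ 2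
  have hrec : ∀ n, a (n + 1) ≤ 1 / 2 * a n + 2 * ‖θs n - θs (n + 1)‖ ^ 2 := fun n => by
    linarith [norm_sub_sq_le_two_mul (θ (n + 1)) (θs n) (θs (n + 1)), hcontract n]
  have hsum : (1 - 1 / 2) * ∑ n ∈ range N, a n ≤ a 0 + 2 * S := by
    have h := sum_range_le_of_le_mul_add (fun n => by positivity) (by norm_num) hrec N
    rwa [← mul_sum] at h
  calc ∑ n ∈ range N, (f n (θ n) - f n (θs n))
      ≤ ∑ n ∈ range N, γ / 2 * a n := sum_le_sum fun n _ =>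
        sub_le_of_smooth_of_gradient_eq_zero (hsm n (θs n)) (hgrad0 n) (θ n)
    _ = γ * ((1 - 1 / 2) * ∑ n ∈ range N, a n) := by rw [← mul_sum]; ring
    _ ≤ γ * (a 0 + 2 * S) := mul_le_mul_of_nonneg_left hsum hγ.le
    _ = 2 * γ * S + γ * a 0 := by ring
end

section
/- Let f_{θ'}(θ) be a bifunction on Θ × Θ with Θ ⊆ ℝ^d convex, such that f_{θ'}(·) is α-strongly convex (in the sense ⟨∇f_{θ'}(θ₁) - ∇f_{θ'}(θ₂), θ₁ - θ₂⟩ ≥ α‖θ₁-θ₂‖²) and ∇f_{·}(θ) is β-Lipschitz in the first argument. If α > β, then the map F(θ) := ∇f_θ(θ) is (α - β)-strongly monotone on Θ: ⟨F(θ) - F(θ'), θ - θ'⟩ ≥ (α - β)‖θ - θ'‖² for all θ, θ' ∈ Θ. -/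
/-! Split `g θ θ - g θ' θ'` through `g θ θ'`: the first difference is controlled by the strong
monotonicity of `g θ`, and the second, by Cauchy–Schwarz and the Lipschitz bound in the
parameter, costs at most `β ‖θ - θ'‖²`. -/

open scoped RealInnerProductSpace

section

variable {E : Type*} [NormedAddCommGroup E] [InnerProductSpace ℝ E]

theorem neg_mul_norm_sq_le_real_inner {u v : E} {β : ℝ} (h : ‖u‖ ≤ β * ‖v‖) :
    -(β * ‖v‖ ^ 2) ≤ ⟪u, v⟫ :=
  calc -(β * ‖v‖ ^ 2) = -(β * ‖v‖ * ‖v‖) := by ring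
    _ ≤ -(‖u‖ * ‖v‖) := neg_le_neg (mul_le_mul_of_nonneg_right h (norm_nonneg v))
    _ ≤ ⟪u, v⟫ := neg_le_of_abs_le (abs_real_inner_le_norm u v)

theorem real_inner_diag_sub_ge {s : Set E} {g : E → E → E} {α β : ℝ}
    (hsc : ∀ p ∈ s, ∀ x ∈ s, ∀ y ∈ s, α * ‖x - y‖ ^ 2 ≤ ⟪g p x - g p y, x - y⟫)
    (hlip : ∀ p₁ ∈ s, ∀ p₂ ∈ s, ∀ x ∈ s, ‖g p₁ x - g p₂ x‖ ≤ β * ‖p₁ - p₂‖)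
    {x y : E} (hx : x ∈ s) (hy : y ∈ s) :
    (α - β) * ‖x - y‖ ^ 2 ≤ ⟪g x x - g y y, x - y⟫ := by
  have hsplit : g x x - g y y = (g x x - g x y) + (g x y - g y y) := by abel
  have hcross := neg_mul_norm_sq_le_real_inner (hlip x hx y hy y hy)
  rw [hsplit, inner_add_left]
  linarith [hsc x hx x hx y hy]

end

theorem diagonal_map_strongly_monotone_general {d : ℕ}
    (Θ : Set (EuclideanSpace ℝ (Fin d)))
    (g : EuclideanSpace ℝ (Fin d) → EuclideanSpace ℝ (Fin d) → EuclideanSpace ℝ (Fin d))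
    (α β : ℝ)
    (hsc : ∀ p ∈ Θ, ∀ x ∈ Θ, ∀ y ∈ Θ,
      (inner ℝ (g p x - g p y) (x - y) : ℝ) ≥ α * ‖x - y‖ ^ 2)
    (hlip : ∀ p₁ ∈ Θ, ∀ p₂ ∈ Θ, ∀ x ∈ Θ, ‖g p₁ x - g p₂ x‖ ≤ β * ‖p₁ - p₂‖) :
    ∀ θ ∈ Θ, ∀ θ' ∈ Θ,
      (inner ℝ (g θ θ - g θ' θ') (θ - θ') : ℝ) ≥ (α - β) * ‖θ - θ'‖ ^ 2 :=
  fun _ hθ _ hθ' => real_inner_diag_sub_ge hsc hlip hθ hθ'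

/-- The diagonal gradient map F(θ) = ∇f_θ(θ) of the bifunction is
(α - β)-strongly monotone on Θ when α > β. -/
theorem diagonal_map_strongly_monotone {d : ℕ}
    (Θ : Set (EuclideanSpace ℝ (Fin d))) (hconv : Convex ℝ Θ)
    (g : EuclideanSpace ℝ (Fin d) → EuclideanSpace ℝ (Fin d) → EuclideanSpace ℝ (Fin d))
    (α β : ℝ) (hβ : 0 ≤ β) (hαβ : β < α)
    (hsc : ∀ p ∈ Θ, ∀ x ∈ Θ, ∀ y ∈ Θ,
      (inner ℝ (g p x - g p y) (x - y) : ℝ) ≥ α * ‖x - y‖ ^ 2)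
    (hlip : ∀ p₁ ∈ Θ, ∀ p₂ ∈ Θ, ∀ x ∈ Θ, ‖g p₁ x - g p₂ x‖ ≤ β * ‖p₁ - p₂‖) :
    ∀ θ ∈ Θ, ∀ θ' ∈ Θ,
      (inner ℝ (g θ θ - g θ' θ') (θ - θ') : ℝ) ≥ (α - β) * ‖θ - θ'‖ ^ 2 :=
  diagonal_map_strongly_monotone_general Θ g α β hsc hlip
end
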